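/- The set 𝔻_{sp} = {w ∈ ZMod (s*p) : w is a unit, (w mod s)^(2^i) ≠ 1 in ZMod s for every natural number i, and (w mod p)^(2^j) ≠ 1 in ZMod p for every natural number j} has exactly 2^(k+l)·(q−1)·(r−1) elements. -/

import Mathlib

/-- Reduction `ZMod (s*p) → ZMod s`. -/
def modS (s p : ℕ) : ZMod (s*p) →+* ZMod s := ZMod.castHom (dvd_mul_right s p) (ZMod s)
/-- Reduction `ZMod (s*p) → ZMod p`. -/
def modP (s p : ℕ) : ZMod (s*p) →+* ZMod p := ZMod.castHom (dvd_mul_left p s) (ZMod p)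

/-- The cryptographic set `𝔻_{sp}`: units none of whose iterated squares is
congruent to `1` modulo `s` or modulo `p`. -/
def Dsp (s p : ℕ) : Set (ZMod (s*p)) :=
  {w | IsUnit w ∧ (∀ i : ℕ, (modS s p w) ^ (2 ^ i) ≠ 1) ∧
       (∀ j : ℕ, (modP s p w) ^ (2 ^ j) ≠ 1)}

/-! By the Chinese remainder theorem `𝔻_{sp}` is the product of the corresponding sets in `ZMod s`
and `ZMod p`. In the cyclic group `(ZMod s)ˣ` of order `2^k q` with `q` odd, an element whose order
is a power of `2` has order dividing `2^k`, so the units with some iterated square equal to `1`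
form the kernel of `u ↦ u^(2^k)`, of size `gcd (2^k q) (2^k) = 2^k`. The remaining
`2^k (q - 1)` units are the ones counted. -/

def unitsNotTwoPowerTorsion (M : Type*) [Monoid M] : Set M :=
  {a | IsUnit a ∧ ∀ i : ℕ, a ^ 2 ^ i ≠ 1}

theorem pow_two_pow_eq_one_of_card_eq_two_pow_mul_odd {G : Type*} [Group G] [Finite G] {k q : ℕ}
    (hq : Odd q) (hG : Nat.card G = 2 ^ k * q) {g : G} {i : ℕ} (hg : g ^ 2 ^ i = 1) :
    g ^ 2 ^ k = 1 := by
  have hcop : (orderOf g).Coprime q :=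
    (Nat.Coprime.pow_left i (Nat.coprime_two_left.2 hq)).coprime_dvd_left
      (orderOf_dvd_of_pow_eq_one hg)
  exact orderOf_dvd_iff_pow_eq_one.1 <| hcop.dvd_of_dvd_mul_right (hG ▸ orderOf_dvd_natCard g)

theorem unitsNotTwoPowerTorsion_eq_compl_ker {G : Type*} [CommGroup G] [Finite G] {k q : ℕ}
    (hq : Odd q) (hG : Nat.card G = 2 ^ k * q) :
    unitsNotTwoPowerTorsion G = ((powMonoidHom (2 ^ k) : G →* G).ker : Set G)ᶜ := by
  ext g
  simp only [unitsNotTwoPowerTorsion, Set.mem_ofPred_eq, Set.mem_compl_iff, SetLike.mem_coe,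
    MonoidHom.mem_ker, powMonoidHom_apply, Group.isUnit, true_and]
  exact ⟨fun h => h k, fun h i hi => h (pow_two_pow_eq_one_of_card_eq_two_pow_mul_odd hq hG hi)⟩

theorem ncard_unitsNotTwoPowerTorsion_of_isCyclic {G : Type*} [CommGroup G] [Finite G]
    [IsCyclic G] {k q : ℕ} (hq : Odd q) (hG : Nat.card G = 2 ^ k * q) :
    (unitsNotTwoPowerTorsion G).ncard = 2 ^ k * (q - 1) := by
  have hker : Nat.card (powMonoidHom (2 ^ k) : G →* G).ker = 2 ^ k := by
    rw [IsCyclic.card_powMonoidHom_ker, hG, Nat.gcd_mul_right_left]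
  rw [unitsNotTwoPowerTorsion_eq_compl_ker hq hG, Set.ncard_compl, ← Nat.card_coe_set_eq,
    SetLike.coe_sort_coe, hker, hG, Nat.mul_sub, mul_one]

theorem image_val_unitsNotTwoPowerTorsion (M : Type*) [Monoid M] :
    Units.val '' unitsNotTwoPowerTorsion Mˣ = unitsNotTwoPowerTorsion M := by
  ext a
  simp only [unitsNotTwoPowerTorsion, Set.mem_image, Set.mem_ofPred_eq, Group.isUnit, true_and]
  constructor
  · rintro ⟨u, hu, rfl⟩
    exact ⟨u.isUnit, fun i h => hu i (Units.ext (by simpa using h))⟩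
  · rintro ⟨⟨u, rfl⟩, ha⟩
    exact ⟨u, fun i h => ha i (by simp [← Units.val_pow_eq_pow_val, h]), rfl⟩

theorem ncard_unitsNotTwoPowerTorsion_of_field {F : Type*} [Field F] [Finite F] {k q : ℕ}
    (hq : Odd q) (hF : Nat.card F = 2 ^ k * q + 1) :
    (unitsNotTwoPowerTorsion F).ncard = 2 ^ k * (q - 1) := by
  rw [← image_val_unitsNotTwoPowerTorsion, Set.ncard_image_of_injective _ Units.val_injective]
  exact ncard_unitsNotTwoPowerTorsion_of_isCyclic hq (by rw [Nat.card_units, hF, Nat.add_sub_cancel])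

theorem chineseRemainder_apply_eq_modS_modP {s p : ℕ} (h : s.Coprime p) (w : ZMod (s * p)) :
    ZMod.chineseRemainder h w = (modS s p w, modP s p w) :=
  RingHom.congr_fun (RingHom.ext_zmod (ZMod.chineseRemainder h).toRingHom
    ((modS s p).prod (modP s p))) w

theorem Dsp_eq_preimage_chineseRemainder {s p : ℕ} (h : s.Coprime p) :
    Dsp s p = ZMod.chineseRemainder h ⁻¹'
      (unitsNotTwoPowerTorsion (ZMod s) ×ˢ unitsNotTwoPowerTorsion (ZMod p)) := by
  ext w
  have hunit : IsUnit w ↔ IsUnit (modS s p w) ∧ IsUnit (modP s p w) := by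
    rw [← isUnit_map_iff (ZMod.chineseRemainder h), chineseRemainder_apply_eq_modS_modP,
      Prod.isUnit_iff]
  simp only [Dsp, unitsNotTwoPowerTorsion, Set.mem_ofPred_eq, Set.mem_preimage, Set.mem_prod,
    chineseRemainder_apply_eq_modS_modP, hunit]
  tauto

theorem ncard_Dsp {s p : ℕ} (h : s.Coprime p) :
    (Dsp s p).ncard =
      (unitsNotTwoPowerTorsion (ZMod s)).ncard * (unitsNotTwoPowerTorsion (ZMod p)).ncard := by
  rw [Dsp_eq_preimage_chineseRemainder h, Set.ncard_preimage_of_injective_subset_range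
    (ZMod.chineseRemainder h).injective (by simp [(ZMod.chineseRemainder h).surjective.range_eq]),
    Set.ncard_prod]

theorem stmt_17_general (s p k l q r : ℕ) (hs : s.Prime) (hp : p.Prime) (hsp : s ≠ p)
    (hq : Odd q) (hr : Odd r)
    (hseq : s = 2 ^ k * q + 1) (hpeq : p = 2 ^ l * r + 1) :
    (Dsp s p).ncard = 2 ^ (k + l) * (q - 1) * (r - 1) := by
  have := Fact.mk hs
  have := Fact.mk hp
  rw [ncard_Dsp ((Nat.coprime_primes hs hp).2 hsp),
    ncard_unitsNotTwoPowerTorsion_of_field hq (by rw [Nat.card_zmod, hseq]),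
    ncard_unitsNotTwoPowerTorsion_of_field hr (by rw [Nat.card_zmod, hpeq]), pow_add]
  ring

theorem stmt_17 (s p k l q r : ℕ) (hs : s.Prime) (hp : p.Prime) (hsp : s ≠ p)
    (hk : 1 ≤ k) (hl : 1 ≤ l) (hq : Odd q) (hr : Odd r)
    (hseq : s = 2 ^ k * q + 1) (hpeq : p = 2 ^ l * r + 1) :
    (Dsp s p).ncard = 2 ^ (k + l) * (q - 1) * (r - 1) :=
  stmt_17_general s p k l q r hs hp hsp hq hr hseq hpeq
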